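/- arXiv:2110.11750 — 2 statements merged into one kernel-verified Lean document; each statement's English description precedes it below -/
import Mathlib

section
/- The minimal operator L₀ is symmetric: for all u, v ∈ Dom(L₀) one has ⟨L₀u, v⟩_{L²(ℝ)} = ⟨u, L₀v⟩_{L²(ℝ)}. -/
open MeasureTheory Complex Filter Set

noncomputable section

/-- The complex Hilbert space `L²(ℝ)`. -/
abbrev Hsp : Type := Lp ℂ 2 (volume : Measure ℝ)

/-- `u` is locally absolutely continuous on `ℝ` with a.e. derivative `g`
(i.e. `u` is the indefinite integral of the locally integrable function `g`). -/
def HasLocDeriv (u g : ℝ → ℂ) : Prop :=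
  LocallyIntegrable g volume ∧ ∀ x : ℝ, u x = u 0 + ∫ t in (0:ℝ)..x, g t

lemma HasLocDeriv.intervalIntegrable {u g : ℝ → ℂ} (h : HasLocDeriv u g) (a b : ℝ) :
    IntervalIntegrable g volume a b :=
  (h.1.integrableOn_isCompact isCompact_uIcc).intervalIntegrable

lemma HasLocDeriv.congr_fun {u v g : ℝ → ℂ} (h : HasLocDeriv u g) (huv : ∀ x, v x = u x) :
    HasLocDeriv v g :=
  ⟨h.1, fun x => by rw [huv x, huv 0]; exact h.2 x⟩

lemma HasLocDeriv.zero : HasLocDeriv (0 : ℝ → ℂ) 0 := by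
  refine ⟨locallyIntegrable_const (0 : ℂ), fun x => by simp⟩

lemma HasLocDeriv.add {u g v h' : ℝ → ℂ} (hu : HasLocDeriv u g) (hv : HasLocDeriv v h') :
    HasLocDeriv (fun x => u x + v x) (fun x => g x + h' x) := by
  refine ⟨hu.1.add hv.1, fun x => ?_⟩
  show u x + v x = u 0 + v 0 + ∫ t in (0:ℝ)..x, (g t + h' t)
  rw [intervalIntegral.integral_add (hu.intervalIntegrable 0 x) (hv.intervalIntegrable 0 x),
    hu.2 x, hv.2 x]
  ring

lemma HasLocDeriv.const_mul {u g : ℝ → ℂ} (c : ℂ) (hu : HasLocDeriv u g) :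
    HasLocDeriv (fun x => c * u x) (fun x => c * g x) := by
  have hli : LocallyIntegrable (fun x => c * g x) volume := hu.1.smul c
  refine ⟨hli, fun x => ?_⟩
  have h : ∫ t in (0:ℝ)..x, c * g t = c * ∫ t in (0:ℝ)..x, g t := by
    simpa [smul_eq_mul] using intervalIntegral.integral_smul c g (a := (0:ℝ)) (b := x) (μ := volume)
  show c * u x = c * u 0 + ∫ t in (0:ℝ)..x, c * g t
  rw [h, hu.2 x]
  ring

/-- The first quasi-derivative `u^{[1]} = p u' - (Q + i r) u`. -/
def qd1 (p Q r : ℝ → ℝ) (u u' : ℝ → ℂ) : ℝ → ℂ :=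
  fun x => (p x : ℂ) * u' x - ((Q x : ℂ) + Complex.I * (r x : ℂ)) * u x

/-- `u` belongs (locally) to the domain of the quasi-differential expression:
`u` is locally absolutely continuous with derivative `u'` and the first quasi-derivative
`u^{[1]} = p u' - (Q + i r) u` is locally absolutely continuous with derivative `w`. -/
def QDom (p Q s r : ℝ → ℝ) (u u' w : ℝ → ℂ) : Prop :=
  HasLocDeriv u u' ∧ HasLocDeriv (qd1 p Q r u u') w

/-- The quasi-differential expression `l[u] = -u^{[2]}` where
`u^{[2]} = (u^{[1]})' + ((Q - i r)/p) u^{[1]} + ((Q² + r²)/p - s) u`. -/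
def lExpr (p Q s r : ℝ → ℝ) (u u' w : ℝ → ℂ) : ℝ → ℂ := fun x =>
  -(w x + (((Q x : ℂ) - Complex.I * (r x : ℂ)) / (p x : ℂ)) * qd1 p Q r u u' x
    + ((((Q x) ^ 2 + (r x) ^ 2 : ℝ) : ℂ) / (p x : ℂ) - (s x : ℂ)) * u x)

/-- The standing minimal regularity assumptions on the real-valued coefficients:
`1/√|p|, Q/√|p|, r/√|p| ∈ L²_loc(ℝ)`, `s ∈ L¹_loc(ℝ)` and `1/p ≠ 0` a.e. -/
structure Coeffs (p Q s r : ℝ → ℝ) : Prop where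
  meas_p : Measurable p
  meas_Q : Measurable Q
  meas_s : Measurable s
  meas_r : Measurable r
  hp : LocallyIntegrable (fun x => 1 / |p x|) volume
  hQ : LocallyIntegrable (fun x => (Q x) ^ 2 / |p x|) volume
  hr : LocallyIntegrable (fun x => (r x) ^ 2 / |p x|) volume
  hs : LocallyIntegrable s volume
  hp0 : ∀ᵐ x ∂(volume : Measure ℝ), p x ≠ 0

lemma qd1_add_eq (p Q r : ℝ → ℝ) (u₁ u₁' u₂ u₂' : ℝ → ℂ) (x : ℝ) :
    qd1 p Q r (fun y => u₁ y + u₂ y) (fun y => u₁' y + u₂' y) x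
      = qd1 p Q r u₁ u₁' x + qd1 p Q r u₂ u₂' x := by
  simp only [qd1]; ring

lemma qd1_smul_eq (p Q r : ℝ → ℝ) (c : ℂ) (u u' : ℝ → ℂ) (x : ℝ) :
    qd1 p Q r (fun y => c * u y) (fun y => c * u' y) x = c * qd1 p Q r u u' x := by
  simp only [qd1]; ring

lemma QDom.zero (p Q s r : ℝ → ℝ) : QDom p Q s r 0 0 0 := by
  refine ⟨HasLocDeriv.zero, HasLocDeriv.zero.congr_fun fun x => ?_⟩
  simp [qd1]

lemma QDom.add {p Q s r : ℝ → ℝ} {u₁ u₁' w₁ u₂ u₂' w₂ : ℝ → ℂ}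
    (h₁ : QDom p Q s r u₁ u₁' w₁) (h₂ : QDom p Q s r u₂ u₂' w₂) :
    QDom p Q s r (fun x => u₁ x + u₂ x) (fun x => u₁' x + u₂' x) (fun x => w₁ x + w₂ x) :=
  ⟨h₁.1.add h₂.1, (h₁.2.add h₂.2).congr_fun (qd1_add_eq p Q r u₁ u₁' u₂ u₂')⟩

lemma QDom.smul {p Q s r : ℝ → ℝ} {u u' w : ℝ → ℂ} (c : ℂ) (h : QDom p Q s r u u' w) :
    QDom p Q s r (fun x => c * u x) (fun x => c * u' x) (fun x => c * w x) :=
  ⟨h.1.const_mul c, (h.2.const_mul c).congr_fun (qd1_smul_eq p Q r c u u')⟩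

lemma lExpr_zero (p Q s r : ℝ → ℝ) (x : ℝ) : lExpr p Q s r 0 0 0 x = 0 := by
  simp [lExpr, qd1]

lemma lExpr_add (p Q s r : ℝ → ℝ) (u₁ u₁' w₁ u₂ u₂' w₂ : ℝ → ℂ) (x : ℝ) :
    lExpr p Q s r (fun y => u₁ y + u₂ y) (fun y => u₁' y + u₂' y) (fun y => w₁ y + w₂ y) x
      = lExpr p Q s r u₁ u₁' w₁ x + lExpr p Q s r u₂ u₂' w₂ x := by
  simp only [lExpr, qd1]; ring

lemma lExpr_smul (p Q s r : ℝ → ℝ) (c : ℂ) (u u' w : ℝ → ℂ) (x : ℝ) :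
    lExpr p Q s r (fun y => c * u y) (fun y => c * u' y) (fun y => c * w y) x
      = c * lExpr p Q s r u u' w x := by
  simp only [lExpr, qd1]; ring

/-- The graph of the maximal operator `L` in `L²(ℝ) × L²(ℝ)`. -/
def maxGraph (p Q s r : ℝ → ℝ) : Submodule ℂ (Hsp × Hsp) where
  carrier := {fg | ∃ u u' w, QDom p Q s r u u' w ∧ (⇑fg.1 =ᵐ[volume] u) ∧
    (⇑fg.2 =ᵐ[volume] lExpr p Q s r u u' w)}
  zero_mem' := by
    refine ⟨0, 0, 0, QDom.zero p Q s r, ?_, ?_⟩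
    · filter_upwards [Lp.coeFn_zero ℂ 2 (volume : Measure ℝ)] with x hx using hx
    · filter_upwards [Lp.coeFn_zero ℂ 2 (volume : Measure ℝ)] with x hx
      rw [lExpr_zero]; exact hx
  add_mem' := by
    rintro ⟨f₁, g₁⟩ ⟨f₂, g₂⟩ ⟨u₁, u₁', w₁, hq₁, hf₁, hg₁⟩ ⟨u₂, u₂', w₂, hq₂, hf₂, hg₂⟩
    refine ⟨fun x => u₁ x + u₂ x, fun x => u₁' x + u₂' x, fun x => w₁ x + w₂ x,
      hq₁.add hq₂, ?_, ?_⟩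
    · filter_upwards [Lp.coeFn_add f₁ f₂, hf₁, hf₂] with x h1 h2 h3
      show (⇑(f₁ + f₂)) x = _
      rw [h1]; simp [h2, h3]
    · filter_upwards [Lp.coeFn_add g₁ g₂, hg₁, hg₂] with x h1 h2 h3
      show (⇑(g₁ + g₂)) x = _
      rw [h1, lExpr_add]; simp [h2, h3]
  smul_mem' := by
    rintro c ⟨f, g⟩ ⟨u, u', w, hq, hf, hg⟩
    refine ⟨fun x => c * u x, fun x => c * u' x, fun x => c * w x, hq.smul c, ?_, ?_⟩
    · filter_upwards [Lp.coeFn_smul c f, hf] with x h1 h2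
      show (⇑(c • f)) x = _
      rw [h1]; simp [h2]
    · filter_upwards [Lp.coeFn_smul c g, hg] with x h1 h2
      show (⇑(c • g)) x = _
      rw [h1, lExpr_smul]; simp [h2]

/-- The graph of the preminimal operator `L₀₀` (compactly supported members of the graph
of the maximal operator). -/
def preminGraph (p Q s r : ℝ → ℝ) : Submodule ℂ (Hsp × Hsp) where
  carrier := {fg | ∃ u u' w, QDom p Q s r u u' w ∧ HasCompactSupport u ∧
    (⇑fg.1 =ᵐ[volume] u) ∧ (⇑fg.2 =ᵐ[volume] lExpr p Q s r u u' w)}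
  zero_mem' := by
    refine ⟨0, 0, 0, QDom.zero p Q s r, by simpa using HasCompactSupport.zero, ?_, ?_⟩
    · filter_upwards [Lp.coeFn_zero ℂ 2 (volume : Measure ℝ)] with x hx using hx
    · filter_upwards [Lp.coeFn_zero ℂ 2 (volume : Measure ℝ)] with x hx
      rw [lExpr_zero]; exact hx
  add_mem' := by
    rintro ⟨f₁, g₁⟩ ⟨f₂, g₂⟩ ⟨u₁, u₁', w₁, hq₁, hc₁, hf₁, hg₁⟩ ⟨u₂, u₂', w₂, hq₂, hc₂, hf₂, hg₂⟩
    refine ⟨fun x => u₁ x + u₂ x, fun x => u₁' x + u₂' x, fun x => w₁ x + w₂ x,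
      hq₁.add hq₂, hc₁.add hc₂, ?_, ?_⟩
    · filter_upwards [Lp.coeFn_add f₁ f₂, hf₁, hf₂] with x h1 h2 h3
      show (⇑(f₁ + f₂)) x = _
      rw [h1]; simp [h2, h3]
    · filter_upwards [Lp.coeFn_add g₁ g₂, hg₁, hg₂] with x h1 h2 h3
      show (⇑(g₁ + g₂)) x = _
      rw [h1, lExpr_add]; simp [h2, h3]
  smul_mem' := by
    rintro c ⟨f, g⟩ ⟨u, u', w, hq, hc, hf, hg⟩
    refine ⟨fun x => c * u x, fun x => c * u' x, fun x => c * w x, hq.smul c,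
      hc.mono ?_, ?_, ?_⟩
    · intro x hx
      simp only [Function.mem_support, ne_eq] at hx ⊢
      exact fun h => hx (by rw [h, mul_zero])
    · filter_upwards [Lp.coeFn_smul c f, hf] with x h1 h2
      show (⇑(c • f)) x = _
      rw [h1]; simp [h2]
    · filter_upwards [Lp.coeFn_smul c g, hg] with x h1 h2
      show (⇑(c • g)) x = _
      rw [h1, lExpr_smul]; simp [h2]

/-- The maximal operator `L`, an unbounded operator in `L²(ℝ)`. -/
def maxOp (p Q s r : ℝ → ℝ) : Hsp →ₗ.[ℂ] Hsp := (maxGraph p Q s r).toLinearPMap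

/-- The preminimal operator `L₀₀`, the restriction of `L` to compactly supported functions. -/
def preminOp (p Q s r : ℝ → ℝ) : Hsp →ₗ.[ℂ] Hsp := (preminGraph p Q s r).toLinearPMap

/-- The minimal operator `L₀`, the closure of `L₀₀`. -/
def minOp (p Q s r : ℝ → ℝ) : Hsp →ₗ.[ℂ] Hsp := (preminOp p Q s r).closure

/-- The boundary bilinear form `[u,v](t) = u(t)·conj(v^{[1]}(t)) − u^{[1]}(t)·conj(v(t))`. -/
def brkt (p Q r : ℝ → ℝ) (u u' v v' : ℝ → ℂ) (t : ℝ) : ℂ :=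
  u t * (starRingEnd ℂ) (qd1 p Q r v v' t) - qd1 p Q r u u' t * (starRingEnd ℂ) (v t)

/-- `u, u', w` is a concrete representative of `f` as a member of `Dom(L)`:
`u` is a representative of the `L²`-class `f`, `u` and `u^{[1]}` are locally absolutely
continuous (with derivatives `u'` and `w` respectively) and `l[u] ∈ L²(ℝ)`. -/
def IsMaxRep (p Q s r : ℝ → ℝ) (f : Hsp) (u u' w : ℝ → ℂ) : Prop :=
  QDom p Q s r u u' w ∧ (⇑f =ᵐ[volume] u) ∧ MemLp (lExpr p Q s r u u' w) 2 volume

/-- Function-level membership in the domain of the preminimal operator `L₀₀`: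
`v` and `v^{[1]}` are locally absolutely continuous, `v, l[v] ∈ L²(ℝ)` and `v` has
compact support. -/
def MemPremin (p Q s r : ℝ → ℝ) (v : ℝ → ℂ) : Prop :=
  ∃ v' w : ℝ → ℂ, QDom p Q s r v v' w ∧ MemLp v 2 volume ∧
    MemLp (lExpr p Q s r v v' w) 2 volume ∧ HasCompactSupport v

/-- `p ∈ W¹_{2,loc}(ℝ)` (for a real-valued function), with weak derivative `p' ∈ L²_loc`. -/
def W12locR (p p' : ℝ → ℝ) : Prop :=
  LocallyIntegrable p' volume ∧ LocallyIntegrable (fun x => (p' x) ^ 2) volume ∧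
  ∀ x : ℝ, p x = p 0 + ∫ t in (0:ℝ)..x, p' t

/-- `φ ∈ W²₂(ℝ)` with compact support: `φ, φ', φ'' ∈ L²(ℝ)` where `φ'` and `φ''` are the
first and second weak derivatives of `φ`, and `supp φ` is compact. -/
def W22cs (φ φ' φ'' : ℝ → ℝ) : Prop :=
  LocallyIntegrable φ' volume ∧ LocallyIntegrable φ'' volume ∧
  MemLp φ 2 volume ∧ MemLp φ' 2 volume ∧ MemLp φ'' 2 volume ∧
  (∀ x : ℝ, φ x = φ 0 + ∫ t in (0:ℝ)..x, φ' t) ∧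
  (∀ x : ℝ, φ' x = φ' 0 + ∫ t in (0:ℝ)..x, φ'' t) ∧
  HasCompactSupport φ

/-- `p ∈ W¹₂([α,β]) = H¹([α,β])` with weak derivative `p'` on the interval `[α,β]`. -/
def W12OnIcc (p p' : ℝ → ℝ) (α β : ℝ) : Prop :=
  IntegrableOn p' (Set.Icc α β) volume ∧ MemLp p' 2 (volume.restrict (Set.Icc α β)) ∧
  ∀ x ∈ Set.Icc α β, p x = p α + ∫ t in α..x, p' t

/-! For compactly supported `u, v ∈ Dom(L)` the Lagrange identity
`l[u]·v̄ - u·conj (l[v]) = [u, v]'` holds wherever `p ≠ 0`, hence a.e.; here `[u, v]` is locally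
absolutely continuous, being built from products of such functions. Integrating over an interval
containing both supports, the boundary terms vanish, so `L₀₀` is symmetric. The inner product is
jointly continuous, so symmetry passes from the graph of `L₀₀` to its closure, which contains the
graph of `L₀`. -/

open scoped ComplexConjugate InnerProductSpace

lemma IsCompact.exists_subset_Ioo {K : Set ℝ} (hK : IsCompact K) :
    ∃ a b, a ≤ b ∧ K ⊆ Ioo a b := by
  obtain ⟨R, hR, hKR⟩ := hK.isBounded.subset_closedBall_lt 0 0
  refine ⟨-(R + 1), R + 1, by linarith, fun x hx => ?_⟩
  have hxR : |x| ≤ R := by simpa using hKR hx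
  obtain ⟨h₁, h₂⟩ := abs_le.mp hxR
  exact ⟨by linarith, by linarith⟩

lemma MeasureTheory.L2.inner_eq_conj_integral_mul_conj {α : Type*} [MeasurableSpace α]
    {μ : Measure α} {f g : Lp ℂ 2 μ} {φ ψ : α → ℂ} (hf : f =ᵐ[μ] φ) (hg : g =ᵐ[μ] ψ) :
    ⟪f, g⟫_ℂ = conj (∫ x, φ x * conj (ψ x) ∂μ) := by
  rw [MeasureTheory.L2.inner_def, ← integral_conj]
  refine integral_congr_ae ?_
  filter_upwards [hf, hg] with x h₁ h₂
  rw [RCLike.inner_apply', h₁, h₂, map_mul, RCLike.conj_conj]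

theorem MeasureTheory.LocallyIntegrable.absolutelyContinuousOnInterval_intervalIntegral
    {g : ℝ → ℂ} (hg : LocallyIntegrable g volume) {a b c : ℝ} (hc : c ∈ uIcc a b) :
    AbsolutelyContinuousOnInterval (fun x => ∫ t in c..x, g t) a b := by
  have hsmul : ∀ (L : ℂ →L[ℝ] ℝ) (z : ℂ),
      AbsolutelyContinuousOnInterval (fun x => (∫ t in c..x, L (g t)) • z) a b := fun L z =>
    (IntegrableOn.intervalIntegrable (L.integrable_comp (hg.integrableOn_isCompact isCompact_uIcc))
      |>.absolutelyContinuousOnInterval_intervalIntegral hc).fun_smul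
      (LipschitzWith.const z).lipschitzOnWith.absolutelyContinuousOnInterval
  have hsplit : (fun x => ∫ t in c..x, g t) = fun x =>
      (∫ t in c..x, Complex.reCLM (g t)) • (1 : ℂ) + (∫ t in c..x, Complex.imCLM (g t)) • I := by
    funext x
    have hgi : IntervalIntegrable g volume c x :=
      (hg.integrableOn_isCompact isCompact_uIcc).intervalIntegrable
    rw [Complex.reCLM.intervalIntegral_comp_comm hgi,
      Complex.imCLM.intervalIntegral_comp_comm hgi]
    simp [Complex.re_add_im]
  rw [hsplit]
  exact (hsmul Complex.reCLM 1).fun_add (hsmul Complex.imCLM I)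

lemma LinearPMap.coe_graph_closure_subset {R E F : Type*} [CommRing R] [AddCommGroup E]
    [Module R E] [TopologicalSpace E] [AddCommGroup F] [Module R F] [TopologicalSpace F]
    [ContinuousAdd E] [ContinuousAdd F] [TopologicalSpace R] [ContinuousSMul R E]
    [ContinuousSMul R F]
    (T : E →ₗ.[R] F) : (T.closure.graph : Set (E × F)) ⊆ _root_.closure T.graph := by
  by_cases hT : T.IsClosable
  · rw [← hT.graph_closure_eq_closure_graph, Submodule.topologicalClosure_coe]
  · rw [LinearPMap.closure_def' hT]
    exact subset_closure

lemma LinearPMap.IsFormalAdjoint.closure {𝕜 E : Type*} [RCLike 𝕜] [NormedAddCommGroup E]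
    [InnerProductSpace 𝕜 E] {T : E →ₗ.[𝕜] E} (hT : T.IsFormalAdjoint T) :
    T.closure.IsFormalAdjoint T.closure := by
  intro x y
  let P : Set ((E × E) × (E × E)) := {q | ⟪q.1.2, q.2.1⟫_𝕜 = ⟪q.1.1, q.2.2⟫_𝕜}
  have hP : _root_.IsClosed P := isClosed_eq (by fun_prop) (by fun_prop)
  have hTP : (T.graph : Set (E × E)) ×ˢ (T.graph : Set (E × E)) ⊆ P := by
    rintro ⟨⟨a₁, b₁⟩, ⟨a₂, b₂⟩⟩ ⟨h₁, h₂⟩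
    obtain ⟨x₁, rfl, rfl⟩ := T.mem_graph_iff.mp h₁
    obtain ⟨x₂, rfl, rfl⟩ := T.mem_graph_iff.mp h₂
    exact hT x₁ x₂
  have hmem : (((x : E), T.closure x), ((y : E), T.closure y)) ∈ _root_.closure
      ((T.graph : Set (E × E)) ×ˢ (T.graph : Set (E × E))) := by
    rw [closure_prod_eq]
    exact ⟨T.coe_graph_closure_subset (T.closure.mem_graph x),
      T.coe_graph_closure_subset (T.closure.mem_graph y)⟩
  exact closure_minimal hTP hP hmem

namespace HasLocDeriv

variable {u g v h : ℝ → ℂ}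

lemma eq_add_intervalIntegral (hu : HasLocDeriv u g) (a x : ℝ) :
    u x = u a + ∫ t in a..x, g t := by
  rw [hu.2 x, hu.2 a, add_assoc, intervalIntegral.integral_add_adjacent_intervals
    (hu.intervalIntegrable 0 a) (hu.intervalIntegrable a x)]

lemma intervalIntegral_eq_sub (hu : HasLocDeriv u g) (a b : ℝ) :
    ∫ t in a..b, g t = u b - u a := by
  rw [hu.eq_add_intervalIntegral a b]; ring

lemma continuous (hu : HasLocDeriv u g) : Continuous u :=
  (continuous_const.add (intervalIntegral.continuous_primitive hu.intervalIntegrable 0)).congr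
    fun x => (hu.2 x).symm

lemma ae_hasDerivAt (hu : HasLocDeriv u g) : ∀ᵐ x, HasDerivAt u (g x) x := by
  filter_upwards [LocallyIntegrable.ae_hasDerivAt_integral hu.1] with x hx
  rw [show u = fun y => u 0 + ∫ t in (0:ℝ)..y, g t from funext hu.2]
  exact (hx 0).const_add _

lemma ae_eq (hg : HasLocDeriv u g) (hh : HasLocDeriv u h) : g =ᵐ[volume] h := by
  filter_upwards [hg.ae_hasDerivAt, hh.ae_hasDerivAt] with x h₁ h₂ using h₁.unique h₂

lemma eq_zero_of_ae_eq_zero (hu : HasLocDeriv u g) (h0 : u =ᵐ[volume] 0) : u = 0 :=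
  (hu.continuous.ae_eq_iff_eq volume continuous_const).mp h0

lemma absolutelyContinuousOnInterval (hu : HasLocDeriv u g) (a b : ℝ) :
    AbsolutelyContinuousOnInterval u a b := by
  rw [show u = fun x => u a + ∫ t in a..x, g t from funext (hu.eq_add_intervalIntegral a)]
  exact (LipschitzWith.const (u a)).lipschitzOnWith.absolutelyContinuousOnInterval.fun_add
    (hu.1.absolutelyContinuousOnInterval_intervalIntegral left_mem_uIcc)

lemma of_absolutelyContinuousOnInterval (hac : ∀ a b, AbsolutelyContinuousOnInterval u a b)
    (hg : LocallyIntegrable g volume) (hd : ∀ᵐ x, HasDerivAt u (g x) x) : HasLocDeriv u g := by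
  refine ⟨hg, fun x => ?_⟩
  have hac' : AbsolutelyContinuousOnInterval (fun y => u y - ∫ t in (0:ℝ)..y, g t) 0 x :=
    (hac 0 x).fun_sub (hg.absolutelyContinuousOnInterval_intervalIntegral left_mem_uIcc)
  have hd' : ∀ᵐ y, y ∈ uIcc 0 x → HasDerivAt (fun y => u y - ∫ t in (0:ℝ)..y, g t) 0 y := by
    filter_upwards [hd, LocallyIntegrable.ae_hasDerivAt_integral hg] with y h₁ h₂ _
    exact (h₁.sub (h₂ 0)).congr_deriv (sub_self _)
  obtain ⟨C, hC⟩ := hac'.const_of_ae_hasDerivAt_zero hd'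
  have h0 := hC 0 left_mem_uIcc
  have hx := hC x right_mem_uIcc
  simp only [intervalIntegral.integral_same, sub_zero] at h0 hx
  rw [← h0] at hx
  exact sub_eq_iff_eq_add.mp hx

lemma sub (hu : HasLocDeriv u g) (hv : HasLocDeriv v h) :
    HasLocDeriv (fun x => u x - v x) (fun x => g x - h x) :=
  of_absolutelyContinuousOnInterval
    (fun a b => (hu.absolutelyContinuousOnInterval a b).fun_sub
      (hv.absolutelyContinuousOnInterval a b))
    (hu.1.sub hv.1)
    (by filter_upwards [hu.ae_hasDerivAt, hv.ae_hasDerivAt] with x h₁ h₂ using h₁.sub h₂)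

lemma mul (hu : HasLocDeriv u g) (hv : HasLocDeriv v h) :
    HasLocDeriv (fun x => u x * v x) (fun x => u x * h x + g x * v x) :=
  of_absolutelyContinuousOnInterval
    (fun a b => (hu.absolutelyContinuousOnInterval a b).fun_smul
      (hv.absolutelyContinuousOnInterval a b))
    ((hv.1.continuous_mul hu.continuous).add (hu.1.mul_continuous hv.continuous))
    (by
      filter_upwards [hu.ae_hasDerivAt, hv.ae_hasDerivAt] with x h₁ h₂
      exact (h₁.mul h₂).congr_deriv (add_comm _ _))

protected lemma star (hu : HasLocDeriv u g) :
    HasLocDeriv (fun x => star (u x)) (fun x => star (g x)) := by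
  refine ⟨hu.1.mono hu.1.aestronglyMeasurable.star (ae_of_all _ fun x => by simp), fun x => ?_⟩
  show star (u x) = star (u 0) + ∫ t in (0:ℝ)..x, star (g t)
  rw [hu.2 x, star_add]
  congr 1
  exact (Complex.conjLIE.toLinearIsometry.intervalIntegral_comp_comm g).symm

end HasLocDeriv

section LagrangeIdentity

variable {p Q s r : ℝ → ℝ} {u u' wu v v' wv : ℝ → ℂ}

def brktDeriv (p Q r : ℝ → ℝ) (u u' wu v v' wv : ℝ → ℂ) : ℝ → ℂ := fun x =>
  (u x * conj (wv x) + u' x * conj (qd1 p Q r v v' x)) -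
    (qd1 p Q r u u' x * conj (v' x) + wu x * conj (v x))

lemma hasLocDeriv_brkt (hu : QDom p Q s r u u' wu) (hv : QDom p Q s r v v' wv) :
    HasLocDeriv (brkt p Q r u u' v v') (brktDeriv p Q r u u' wu v v' wv) :=
  (hu.1.mul hv.2.star).sub (hu.2.mul hv.1.star)

lemma brktDeriv_eq_lExpr_mul_conj_sub {x : ℝ} (hp : p x ≠ 0) :
    brktDeriv p Q r u u' wu v v' wv x
      = lExpr p Q s r u u' wu x * conj (v x) - u x * conj (lExpr p Q s r v v' wv x) := by
  have hpc : (p x : ℂ) ≠ 0 := by exact_mod_cast hp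
  simp only [brktDeriv, lExpr, qd1, map_sub, map_add, map_mul, map_neg, map_div₀,
    Complex.conj_ofReal, Complex.conj_I]
  field_simp
  ring

lemma integral_lExpr_mul_conj_eq (hp : ∀ᵐ x, p x ≠ 0)
    (hu : QDom p Q s r u u' wu) (hv : QDom p Q s r v v' wv)
    (hu₂ : MemLp u 2 volume) (hv₂ : MemLp v 2 volume)
    (hlu₂ : MemLp (lExpr p Q s r u u' wu) 2 volume) (hlv₂ : MemLp (lExpr p Q s r v v' wv) 2 volume)
    (hus : HasCompactSupport u) (hvs : HasCompactSupport v) :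
    ∫ x, lExpr p Q s r u u' wu x * conj (v x) = ∫ x, u x * conj (lExpr p Q s r v v' wv x) := by
  obtain ⟨a, b, hab, hK⟩ := (hus.union hvs).exists_subset_Ioo
  have hu0 : ∀ x ∉ Ioo a b, u x = 0 := fun x hx =>
    image_eq_zero_of_notMem_tsupport fun h => hx (hK (Or.inl h))
  have hv0 : ∀ x ∉ Ioo a b, v x = 0 := fun x hx =>
    image_eq_zero_of_notMem_tsupport fun h => hx (hK (Or.inr h))
  have hout : ∀ x ∉ Ioc a b, x ∉ Ioo a b := fun x hx h => hx (Ioo_subset_Ioc_self h)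
  have hint₁ : Integrable (fun x => lExpr p Q s r u u' wu x * conj (v x)) :=
    hlu₂.integrable_mul hv₂.star
  have hint₂ : Integrable (fun x => u x * conj (lExpr p Q s r v v' wv x)) :=
    hu₂.integrable_mul hlv₂.star
  rw [← sub_eq_zero, ← integral_sub hint₁ hint₂]
  calc ∫ x, (lExpr p Q s r u u' wu x * conj (v x) - u x * conj (lExpr p Q s r v v' wv x))
      = ∫ x in Ioc a b,
          (lExpr p Q s r u u' wu x * conj (v x) - u x * conj (lExpr p Q s r v v' wv x)) :=
        (setIntegral_eq_integral_of_forall_compl_eq_zero fun x hx => by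
          simp [hu0 x (hout x hx), hv0 x (hout x hx)]).symm
    _ = ∫ x in a..b, brktDeriv p Q r u u' wu v v' wv x := by
        rw [intervalIntegral.integral_of_le hab]
        exact integral_congr_ae (ae_restrict_of_ae (hp.mono fun x hx =>
          (brktDeriv_eq_lExpr_mul_conj_sub hx).symm))
    _ = brkt p Q r u u' v v' b - brkt p Q r u u' v v' a :=
        (hasLocDeriv_brkt hu hv).intervalIntegral_eq_sub a b
    _ = 0 := by
        simp [brkt, hu0 a (by simp), hu0 b (by simp), hv0 a (by simp), hv0 b (by simp)]

end LagrangeIdentity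

section PreminimalOperator

variable {p Q s r : ℝ → ℝ}

lemma preminGraph_snd_eq_zero {z : Hsp × Hsp} (hz : z ∈ preminGraph p Q s r) (h0 : z.1 = 0) :
    z.2 = 0 := by
  obtain ⟨u, u', w, ⟨hu, hqd⟩, -, hf, hl⟩ := hz
  have hu0 : u = 0 := hu.eq_zero_of_ae_eq_zero <| hf.symm.trans <| by
    rw [h0]; exact Lp.coeFn_zero ℂ 2 volume
  subst hu0
  have hu' : u' =ᵐ[volume] 0 := hu.ae_eq HasLocDeriv.zero
  have hqd0 : qd1 p Q r 0 u' = 0 := hqd.eq_zero_of_ae_eq_zero <| hu'.mono fun x hx => by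
    simp [qd1, hx]
  have hw : w =ᵐ[volume] 0 := hqd.ae_eq (HasLocDeriv.zero.congr_fun (congrFun hqd0))
  rw [Lp.eq_zero_iff_ae_eq_zero]
  filter_upwards [hl, hw] with x h₁ h₂
  simp [h₁, lExpr, h₂, congrFun hqd0 x]

lemma inner_snd_fst_eq_of_mem_preminGraph (hp : ∀ᵐ x, p x ≠ 0) {z₁ z₂ : Hsp × Hsp}
    (h₁ : z₁ ∈ preminGraph p Q s r) (h₂ : z₂ ∈ preminGraph p Q s r) :
    ⟪z₁.2, z₂.1⟫_ℂ = ⟪z₁.1, z₂.2⟫_ℂ := by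
  obtain ⟨u, u', wu, hu, hus, hfu, hlu⟩ := h₁
  obtain ⟨v, v', wv, hv, hvs, hfv, hlv⟩ := h₂
  rw [L2.inner_eq_conj_integral_mul_conj hlu hfv, L2.inner_eq_conj_integral_mul_conj hfu hlv,
    integral_lExpr_mul_conj_eq hp hu hv ((Lp.memLp _).ae_eq hfu) ((Lp.memLp _).ae_eq hfv)
      ((Lp.memLp _).ae_eq hlu) ((Lp.memLp _).ae_eq hlv) hus hvs]

lemma preminOp_isFormalAdjoint (hp : ∀ᵐ x, p x ≠ 0) :
    (preminOp p Q s r).IsFormalAdjoint (preminOp p Q s r) := by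
  have hgraph : (preminOp p Q s r).graph = preminGraph p Q s r :=
    Submodule.toLinearPMap_graph_eq _ fun _ => preminGraph_snd_eq_zero
  intro x y
  have hx := (preminOp p Q s r).mem_graph x
  have hy := (preminOp p Q s r).mem_graph y
  rw [hgraph] at hx hy
  exact inner_snd_fst_eq_of_mem_preminGraph hp hx hy

end PreminimalOperator

/-- The minimal operator `L₀` is symmetric:
`⟨L₀u, v⟩ = ⟨u, L₀v⟩` for all `u, v ∈ Dom(L₀)`. -/
theorem minOp_symmetric (p Q s r : ℝ → ℝ) (hc : Coeffs p Q s r)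
    (u v : (minOp p Q s r).domain) :
    (inner ℂ ((minOp p Q s r) u) ((v : Hsp)) : ℂ)
      = (inner ℂ ((u : Hsp)) ((minOp p Q s r) v) : ℂ) :=
  (preminOp_isFormalAdjoint hc.hp0).closure u v
end
end

section
/- Let Δ ⊂ ℝ be a finite interval, and suppose p ∈ L^∞(Δ) and 1/p ∈ L^∞(Δ). Then (i) Q and r belong to L²(Δ), and (ii) every u ∈ Dom(L) satisfies u|_Δ ∈ W¹₂(Δ). In particular, if p, 1/p ∈ L^∞_loc(ℝ), then Q, r ∈ L²_loc(ℝ) and Dom(L) ⊂ W¹_{2,loc}(ℝ). -/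
open MeasureTheory Complex Filter Set

noncomputable section

/-! Since `p` is essentially bounded on `Δ`, `Q² ≤ ‖p‖_∞ · Q²/|p|` there, and likewise for `r`.
For `u ∈ Dom(L)`, both `u` and `u^[1]` are continuous, hence bounded on `Δ`, and solving the
definition of `u^[1]` for the derivative gives `u' = (1/p) · (u^[1] + (Q + i r) u)`: an `L^∞`
function times an `L²(Δ)` function. -/

lemma HasLocDeriv.continuous_s5 {u g : ℝ → ℂ} (h : HasLocDeriv u g) : Continuous u :=
  (continuous_const.add (intervalIntegral.continuous_primitive h.intervalIntegrable 0)).congr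
    fun x => (h.2 x).symm

lemma Continuous.memLp_top_restrict {E : Type*} [NormedAddCommGroup E] {μ : Measure ℝ}
    {f : ℝ → E} (hf : Continuous f) {S : Set ℝ} (hS : Bornology.IsBounded S) :
    MemLp f ⊤ (μ.restrict S) := by
  obtain ⟨C, hC⟩ := hS.isCompact_closure.exists_bound_of_continuousOn hf.continuousOn
  have hclosure : MemLp f ⊤ (μ.restrict (closure S)) :=
    memLp_top_of_bound hf.aestronglyMeasurable C
      (ae_restrict_of_forall_mem isClosed_closure.measurableSet hC)
  exact hclosure.mono_measure (Measure.restrict_mono subset_closure le_rfl)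

lemma memLp_two_of_integrable_sq_div_abs {α : Type*} [MeasurableSpace α] {μ : Measure α}
    {p q : α → ℝ} (hq : AEStronglyMeasurable q μ)
    (hqp : Integrable (fun x => q x ^ 2 / |p x|) μ) (hp : MemLp p ⊤ μ)
    (hp0 : ∀ᵐ x ∂μ, p x ≠ 0) : MemLp q 2 μ := by
  rw [memLp_two_iff_integrable_sq hq]
  have hprod : Integrable (fun x => |p x| * (q x ^ 2 / |p x|)) μ :=
    memLp_one_iff_integrable.1 ((memLp_one_iff_integrable.2 hqp).mul' hp.abs)
  refine hprod.congr ?_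
  filter_upwards [hp0] with x hx
  field_simp

lemma eq_inv_mul_qd1_add {p Q r : ℝ → ℝ} {u u' : ℝ → ℂ} {x : ℝ} (hx : p x ≠ 0) :
    u' x = ((1 / p x : ℝ) : ℂ) * (qd1 p Q r u u' x + ((Q x : ℂ) + I * r x) * u x) := by
  have hx' : (p x : ℂ) ≠ 0 := ofReal_ne_zero.2 hx
  simp only [qd1]
  push_cast
  field_simp
  ring

lemma memLp_two_of_qd1 {μ : Measure ℝ} [IsFiniteMeasure μ] {p Q r : ℝ → ℝ} {u u' : ℝ → ℂ}
    (hp' : MemLp (fun x => 1 / p x) ⊤ μ) (hp0 : ∀ᵐ x ∂μ, p x ≠ 0)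
    (hQ : MemLp Q 2 μ) (hr : MemLp r 2 μ) (hu : MemLp u ⊤ μ)
    (hqd : MemLp (qd1 p Q r u u') ⊤ μ) : MemLp u' 2 μ := by
  have hcoeff : MemLp (fun x => (Q x : ℂ) + I * r x) 2 μ :=
    (hQ.ofReal (K := ℂ)).add ((hr.ofReal (K := ℂ)).const_mul I)
  have hsum : MemLp (fun x => qd1 p Q r u u' x + ((Q x : ℂ) + I * r x) * u x) 2 μ :=
    (hqd.mono_exponent le_top).add (hu.mul' hcoeff)
  have hinv : MemLp (fun x => ((1 / p x : ℝ) : ℂ)) ⊤ μ := hp'.ofReal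
  refine (hsum.mul' hinv).ae_eq ?_
  filter_upwards [hp0] with x hx using (eq_inv_mul_qd1_add hx).symm

theorem regularity_on_interval_general (p Q s r : ℝ → ℝ) (hc : Coeffs p Q s r)
    (a b : ℝ)
    (hp : MemLp p ⊤ (volume.restrict (Set.Ioo a b)))
    (hp' : MemLp (fun x => 1 / p x) ⊤ (volume.restrict (Set.Ioo a b))) :
    (MemLp Q 2 (volume.restrict (Set.Ioo a b)) ∧ MemLp r 2 (volume.restrict (Set.Ioo a b))) ∧
    ∀ (f : Hsp) (u u' w : ℝ → ℂ), f ∈ (maxOp p Q s r).domain →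
      IsMaxRep p Q s r f u u' w →
        MemLp u 2 (volume.restrict (Set.Ioo a b)) ∧
        MemLp u' 2 (volume.restrict (Set.Ioo a b)) := by
  have hp0 : ∀ᵐ x ∂(volume.restrict (Ioo a b)), p x ≠ 0 := ae_restrict_of_ae hc.hp0
  have integrableOn_Ioo {g : ℝ → ℝ} (hg : LocallyIntegrable g volume) :
      Integrable g (volume.restrict (Ioo a b)) :=
    (hg.integrableOn_isCompact isCompact_Icc).mono_set Ioo_subset_Icc_self
  have hQ := memLp_two_of_integrable_sq_div_abs hc.meas_Q.aestronglyMeasurable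
    (integrableOn_Ioo hc.hQ) hp hp0
  have hr := memLp_two_of_integrable_sq_div_abs hc.meas_r.aestronglyMeasurable
    (integrableOn_Ioo hc.hr) hp hp0
  refine ⟨⟨hQ, hr⟩, fun f u u' w _ ⟨⟨hu, hqd⟩, _, _⟩ => ?_⟩
  have hu_top := hu.continuous_s5.memLp_top_restrict (μ := volume) (Metric.isBounded_Ioo a b)
  exact ⟨hu_top.mono_exponent le_top, memLp_two_of_qd1 hp' hp0 hQ hr hu_top
    (hqd.continuous_s5.memLp_top_restrict (Metric.isBounded_Ioo a b))⟩

/-- Let `Δ = (a,b)` be a finite interval with `p, 1/p ∈ L^∞(Δ)`. Then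
`Q, r ∈ L²(Δ)`, and every `u ∈ Dom(L)` satisfies `u|_Δ ∈ W¹₂(Δ)` (i.e. both `u` and its
derivative `u'` are square integrable on `Δ`). -/
theorem regularity_on_interval (p Q s r : ℝ → ℝ) (hc : Coeffs p Q s r)
    (a b : ℝ) (hab : a < b)
    (hp : MemLp p ⊤ (volume.restrict (Set.Ioo a b)))
    (hp' : MemLp (fun x => 1 / p x) ⊤ (volume.restrict (Set.Ioo a b))) :
    (MemLp Q 2 (volume.restrict (Set.Ioo a b)) ∧ MemLp r 2 (volume.restrict (Set.Ioo a b))) ∧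
    ∀ (f : Hsp) (u u' w : ℝ → ℂ), f ∈ (maxOp p Q s r).domain →
      IsMaxRep p Q s r f u u' w →
        MemLp u 2 (volume.restrict (Set.Ioo a b)) ∧
        MemLp u' 2 (volume.restrict (Set.Ioo a b)) :=
  regularity_on_interval_general p Q s r hc a b hp hp'

end
end
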